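/- arXiv:1707.05712 — 2 statements merged into one kernel-verified Lean document; each statement's English description precedes it below -/
import Mathlib

section
/- Theorem 2 (Mansour et al. domain adaptation bound): if H is symmetric, h*_S ∈ H minimizes R_S over H, and h*_T ∈ H minimizes R_T over H, then for every h ∈ H, R_T(h) − R_T(h*_T) ≤ R_{S_X}(h*_S, h) + sup_{(h₁,h₂)∈H²} |R_{T_X}(h₁,h₂) − R_{S_X}(h₁,h₂)| + R_{S_X}(h*_S, h*_T). -/
open MeasureTheory Real

noncomputable section

/-- The 0-1 loss on labels in `{−1,+1}`, encoded by `Bool` (`false ↦ −1`, `true ↦ +1`). -/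
def l01 (a b : Bool) : ℝ := if a = b then 0 else 1

variable {X : Type*} [MeasurableSpace X]

/-- The expected error `R_P(h)` of a hypothesis `h` on a domain `P` over `X × Y`. -/
def risk (P : Measure (X × Bool)) (h : X → Bool) : ℝ := ∫ z, l01 (h z.1) z.2 ∂P

/-- The expected disagreement `R_{D_X}(h,h')` of two hypotheses on a marginal `D_X`. -/
def disag (D : Measure X) (h h' : X → Bool) : ℝ := ∫ x, l01 (h x) (h' x) ∂D

/-! The proof is the triangle inequality for the 0-1 loss, applied twice. Pointwise,
`ℓ(h x, y) ≤ ℓ(h x, h*_T x) + ℓ(h*_T x, y)`, so `R_T(h) − R_T(h*_T) ≤ R_{T_X}(h, h*_T)`. Passing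
from `T_X` to `S_X` costs at most the discrepancy, since `h, h*_T ∈ H`, and on `S_X` one more
triangle inequality through `h*_S` splits `R_{S_X}(h, h*_T)`. -/

lemma l01_nonneg (a b : Bool) : 0 ≤ l01 a b := by
  unfold l01; split <;> norm_num

lemma abs_l01_le_one (a b : Bool) : |l01 a b| ≤ 1 := by
  unfold l01; split <;> norm_num

lemma l01_comm (a b : Bool) : l01 a b = l01 b a := by
  simp only [l01, eq_comm]

lemma l01_triangle (a b c : Bool) : l01 a c ≤ l01 a b + l01 b c := by
  cases a <;> cases b <;> cases c <;> norm_num [l01]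

section Integral

variable {α : Type*} [MeasurableSpace α]

lemma Measurable.l01 {f g : α → Bool} (hf : Measurable f) (hg : Measurable g) :
    Measurable fun x => l01 (f x) (g x) :=
  Measurable.ite (measurableSet_eq_fun hf hg) measurable_const measurable_const

lemma integrable_l01 (μ : Measure α) [IsFiniteMeasure μ] {f g : α → Bool}
    (hf : Measurable f) (hg : Measurable g) : Integrable (fun x => l01 (f x) (g x)) μ :=
  (integrable_const (1 : ℝ)).mono' (hf.l01 hg).aestronglyMeasurable
    (.of_forall fun _ => abs_l01_le_one _ _)

lemma integral_l01_triangle (μ : Measure α) [IsFiniteMeasure μ] {f g k : α → Bool}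
    (hf : Measurable f) (hg : Measurable g) (hk : Measurable k) :
    ∫ x, l01 (f x) (k x) ∂μ ≤ ∫ x, l01 (f x) (g x) ∂μ + ∫ x, l01 (g x) (k x) ∂μ := by
  rw [← integral_add (integrable_l01 μ hf hg) (integrable_l01 μ hg hk)]
  exact integral_mono (integrable_l01 μ hf hk)
    ((integrable_l01 μ hf hg).add (integrable_l01 μ hg hk)) fun x => l01_triangle _ _ _

end Integral

lemma disag_nonneg (D : Measure X) (f g : X → Bool) : 0 ≤ disag D f g :=
  integral_nonneg fun _ => l01_nonneg _ _

lemma disag_le_measureReal_univ (D : Measure X) [IsFiniteMeasure D] (f g : X → Bool) :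
    disag D f g ≤ D.real Set.univ := by
  have := norm_integral_le_of_norm_le_const (μ := D) (f := fun x => l01 (f x) (g x))
    (.of_forall fun x => abs_l01_le_one (f x) (g x))
  rw [one_mul, Real.norm_eq_abs] at this
  exact (le_abs_self _).trans this

lemma disag_comm (D : Measure X) (f g : X → Bool) : disag D f g = disag D g f := by
  simp only [disag, l01_comm (f _)]

lemma disag_triangle (D : Measure X) [IsFiniteMeasure D] {f g k : X → Bool}
    (hf : Measurable f) (hg : Measurable g) (hk : Measurable k) :
    disag D f k ≤ disag D f g + disag D g k :=
  integral_l01_triangle D hf hg hk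

lemma disag_map_fst (P : Measure (X × Bool)) {f g : X → Bool}
    (hf : Measurable f) (hg : Measurable g) :
    disag (P.map Prod.fst) f g = ∫ z, l01 (f z.1) (g z.1) ∂P :=
  integral_map measurable_fst.aemeasurable (hf.l01 hg).aestronglyMeasurable

lemma risk_sub_risk_le_disag (P : Measure (X × Bool)) [IsFiniteMeasure P] {h h' : X → Bool}
    (hh : Measurable h) (hh' : Measurable h') :
    risk P h - risk P h' ≤ disag (P.map Prod.fst) h h' := by
  have := integral_l01_triangle P (hh.comp measurable_fst) (hh'.comp measurable_fst)
    measurable_snd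
  rw [disag_map_fst P hh hh']
  simp only [risk, Function.comp_apply] at this ⊢
  linarith

section Supremum

variable {α β : Type*}

lemma Real.biSup_le_max_zero {A : Set α} {g : α → ℝ} {C : ℝ} (hg : ∀ a, g a ≤ C) :
    ⨆ a ∈ A, g a ≤ max C 0 :=
  Real.iSup_le (fun a => Real.iSup_le (fun _ => (hg a).trans (le_max_left _ _))
    (le_max_right _ _)) (le_max_right _ _)

lemma Real.le_biSup {A : Set α} {g : α → ℝ} {C : ℝ} (hg : ∀ a, g a ≤ C) {a : α}
    (ha : a ∈ A) : g a ≤ ⨆ x ∈ A, g x := by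
  have hbdd : BddAbove (Set.range fun x => ⨆ _ : x ∈ A, g x) := by
    refine ⟨max C 0, ?_⟩
    rintro _ ⟨x, rfl⟩
    exact Real.iSup_le (fun _ => (hg x).trans (le_max_left _ _)) (le_max_right _ _)
  calc g a = ⨆ _ : a ∈ A, g a := (ciSup_pos (f := fun _ => g a) ha).symm
    _ ≤ ⨆ x ∈ A, g x := le_ciSup hbdd a

lemma Real.le_biSup_biSup {A : Set α} {B : Set β} {f : α → β → ℝ} {C : ℝ}
    (hf : ∀ a b, f a b ≤ C) {a : α} {b : β} (ha : a ∈ A) (hb : b ∈ B) :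
    f a b ≤ ⨆ x ∈ A, ⨆ y ∈ B, f x y :=
  (Real.le_biSup (hf a) hb).trans
    (Real.le_biSup (fun x => Real.biSup_le_max_zero (A := B) (hf x)) ha)

end Supremum

/-- The discrepancy distance `disc_{0-1}(μ, ν)` over the hypothesis class `H`. -/
def discrepancy (H : Set (X → Bool)) (μ ν : Measure X) : ℝ :=
  ⨆ h₁ ∈ H, ⨆ h₂ ∈ H, |disag ν h₁ h₂ - disag μ h₁ h₂|

lemma disag_le_disag_add_discrepancy {H : Set (X → Bool)} (μ ν : Measure X)
    [IsFiniteMeasure μ] [IsFiniteMeasure ν] {f g : X → Bool} (hf : f ∈ H) (hg : g ∈ H) :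
    disag ν f g ≤ disag μ f g + discrepancy H μ ν := by
  -- a real `⨆` is junk (`0`) unless bounded above, so the bound is what makes the supremum genuine
  have hbound : ∀ a b, |disag ν a b - disag μ a b| ≤ ν.real Set.univ + μ.real Set.univ := by
    intro a b
    have := disag_le_measureReal_univ ν a b
    have := disag_le_measureReal_univ μ a b
    have := disag_nonneg ν a b
    have := disag_nonneg μ a b
    rw [abs_le]
    constructor <;> linarith
  calc disag ν f g ≤ disag μ f g + |disag ν f g - disag μ f g| := by
        linarith [le_abs_self (disag ν f g - disag μ f g)]
    _ ≤ disag μ f g + discrepancy H μ ν := by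
        gcongr
        exact Real.le_biSup_biSup hbound hf hg

theorem mansour_da_bound_general
    (S T : Measure (X × Bool)) [IsProbabilityMeasure S] [IsProbabilityMeasure T]
    (H : Set (X → Bool)) (hHmeas : ∀ h ∈ H, Measurable h)
    (hS hT : X → Bool) (hhS : hS ∈ H) (hhT : hT ∈ H)
    (h : X → Bool) (hh : h ∈ H) :
    risk T h - risk T hT ≤ disag (S.map Prod.fst) hS h
      + (⨆ h₁ ∈ H, ⨆ h₂ ∈ H,
          |disag (T.map Prod.fst) h₁ h₂ - disag (S.map Prod.fst) h₁ h₂|)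
      + disag (S.map Prod.fst) hS hT := by
  have hmh := hHmeas h hh
  have hmS := hHmeas hS hhS
  have hmT := hHmeas hT hhT
  calc risk T h - risk T hT ≤ disag (T.map Prod.fst) h hT := risk_sub_risk_le_disag T hmh hmT
    _ ≤ disag (S.map Prod.fst) h hT + discrepancy H (S.map Prod.fst) (T.map Prod.fst) :=
      disag_le_disag_add_discrepancy _ _ hh hhT
    _ ≤ disag (S.map Prod.fst) hS h + discrepancy H (S.map Prod.fst) (T.map Prod.fst)
          + disag (S.map Prod.fst) hS hT := by
      rw [← disag_comm _ h hS]
      linarith [disag_triangle (S.map Prod.fst) hmh hmS hmT]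

/-- Theorem 2 (Mansour et al. domain adaptation bound): if `H` is symmetric,
`h*_S ∈ H` minimizes `R_S` over `H` and `h*_T ∈ H` minimizes `R_T` over `H`,
then for every `h ∈ H`,
`R_T(h) − R_T(h*_T) ≤ R_{S_X}(h*_S,h) + sup_{(h₁,h₂)∈H²} |R_{T_X}(h₁,h₂) − R_{S_X}(h₁,h₂)|
  + R_{S_X}(h*_S,h*_T)`. -/
theorem mansour_da_bound
    (S T : Measure (X × Bool)) [IsProbabilityMeasure S] [IsProbabilityMeasure T]
    (H : Set (X → Bool)) (hHmeas : ∀ h ∈ H, Measurable h)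
    (hHsym : ∀ h ∈ H, (fun x => !(h x)) ∈ H)
    (hS hT : X → Bool) (hhS : hS ∈ H) (hhT : hT ∈ H)
    (hSmin : ∀ g ∈ H, risk S hS ≤ risk S g)
    (hTmin : ∀ g ∈ H, risk T hT ≤ risk T g)
    (h : X → Bool) (hh : h ∈ H) :
    risk T h - risk T hT ≤ disag (S.map Prod.fst) hS h
      + (⨆ h₁ ∈ H, ⨆ h₂ ∈ H,
          |disag (T.map Prod.fst) h₁ h₂ - disag (S.map Prod.fst) h₁ h₂|)
      + disag (S.map Prod.fst) hS hT :=
  mansour_da_bound_general S T H hHmeas hS hT hhS hhT h hh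

end
end

section
/- Expected disagreement of the Gaussian linear posterior (Equation (19)): for any marginal distribution D_X on ℝ^d with D_X-almost surely x ≠ 0 and any w ∈ ℝ^d, the expected disagreement satisfies d_{D_X}(ρ_w) = E_{x~D_X} Φ_d((w·x)/‖x‖), where Φ_d(z) = 2·Φ(z)·Φ(−z). -/
open MeasureTheory

noncomputable section

/-- The real value of a label: `true ↦ +1`, `false ↦ −1`. -/
def yval (b : Bool) : ℝ := if b then 1 else -1

variable {d : ℕ}

/-- Dot product on `ℝ^d`. -/
def dotp (w x : Fin d → ℝ) : ℝ := ∑ i, w i * x i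

/-- Euclidean norm on `ℝ^d`. -/
def nrm (x : Fin d → ℝ) : ℝ := Real.sqrt (∑ i, x i ^ 2)

open Classical in
/-- The linear classifier `h_w(x) = sign(w·x)` (`true ↦ +1`, `false ↦ −1`). -/
def hlin (w x : Fin d → ℝ) : Bool := if 0 < dotp w x then true else false

/-- The Gaussian measure `γ_w` on `ℝ^d` with mean `w` and identity covariance, given as the
product over coordinates of one-dimensional Gaussians `N(w_i, 1)`. -/
def gauss (w : Fin d → ℝ) : Measure (Fin d → ℝ) :=
  Measure.pi fun i => ProbabilityTheory.gaussianReal (w i) 1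

/-- The standard Gaussian tail function `Φ(z) = (1/√(2π)) ∫_z^∞ e^{−t²/2} dt`. -/
def gaussTail (z : ℝ) : ℝ :=
  ∫ t in Set.Ici z, Real.exp (-t ^ 2 / 2) / Real.sqrt (2 * Real.pi)

/-- `Φ_d(z) = 2·Φ(z)·Φ(−z)`. -/
def PhiDis (z : ℝ) : ℝ := 2 * gaussTail z * gaussTail (-z)

/-! For fixed `x ≠ 0` the linear form `u ↦ u·x` pushes `γ_w` forward to `N(w·x, ‖x‖²)` (compare
characteristic functions coordinatewise), so `h_u(x) = +1` with probability
`p = Φ(−(w·x)/‖x‖)`. Two independent draws then disagree with probability `2p(1 − p)`, and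
`1 − p = Φ((w·x)/‖x‖)` by the symmetry of the standard Gaussian. Fubini moves the expectation
over `x` outside. -/

open ProbabilityTheory Set
open scoped NNReal

section BoolValued

variable {Ω : Type*} [MeasurableSpace Ω] {μ : Measure Ω}

lemma integral_comp_bool [IsFiniteMeasure μ] {h : Ω → Bool} (hh : Measurable h) (g : Bool → ℝ) :
    ∫ u, g (h u) ∂μ = ∑ b, μ.real (h ⁻¹' {b}) * g b := by
  rw [← integral_map hh.aemeasurable (measurable_of_finite g).aestronglyMeasurable,
    integral_fintype .of_finite]
  simp only [map_measureReal_apply hh (measurableSet_singleton _), smul_eq_mul]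

lemma integral_integral_l01 [IsProbabilityMeasure μ] {h : Ω → Bool} (hh : Measurable h) :
    ∫ u, ∫ v, l01 (h u) (h v) ∂μ ∂μ
      = 2 * μ.real (h ⁻¹' {true}) * (1 - μ.real (h ⁻¹' {true})) := by
  have hfalse : μ.real (h ⁻¹' {false}) = 1 - μ.real (h ⁻¹' {true}) := by
    rw [← probReal_compl_eq_one_sub (hh (measurableSet_singleton true))]
    congr 1
    ext u
    simp
  have inner (a : Bool) : ∫ v, l01 a (h v) ∂μ = ∑ b, μ.real (h ⁻¹' {b}) * l01 a b :=
    integral_comp_bool hh (l01 a)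
  simp_rw [inner]
  rw [integral_comp_bool hh fun a => ∑ b, μ.real (h ⁻¹' {b}) * l01 a b]
  simp only [Fintype.sum_bool, l01, hfalse, Bool.true_eq_false, Bool.false_eq_true, ↓reduceIte]
  ring

lemma integrable_l01_comp [IsFiniteMeasure μ] {a b : Ω → Bool} (ha : Measurable a)
    (hb : Measurable b) : Integrable (fun u => l01 (a u) (b u)) μ := by
  refine .of_bound ?_ 1 (ae_of_all _ fun u => ?_)
  · exact ((measurable_of_finite (Function.uncurry l01)).comp (ha.prodMk hb)).aestronglyMeasurable
  · unfold l01
    split_ifs <;> norm_num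

end BoolValued

section GaussianReal

lemma map_pi_gaussianReal_sum_mul {ι : Type*} [Fintype ι] (m : ι → ℝ) (v : ι → ℝ≥0)
    (x : ι → ℝ) :
    (Measure.pi fun i => gaussianReal (m i) (v i)).map (fun u => ∑ i, u i * x i)
      = gaussianReal (∑ i, m i * x i) (∑ i, ‖x i‖₊ ^ 2 * v i) := by
  refine Measure.ext_of_charFun (funext fun t => ?_)
  have hprod (u : ι → ℝ) : Complex.exp (t * (∑ i, u i * x i : ℝ) * Complex.I)
      = ∏ i, Complex.exp ((t * x i : ℝ) * u i * Complex.I) := by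
    rw [← Complex.exp_sum]
    push_cast
    congr 1
    rw [Finset.mul_sum, Finset.sum_mul]
    exact Finset.sum_congr rfl fun i _ => by ring
  have hvar : ((∑ i, ‖x i‖₊ ^ 2 * v i : ℝ≥0) : ℝ) = ∑ i, x i ^ 2 * v i := by
    push_cast
    simp only [Real.norm_eq_abs, sq_abs]
  rw [charFun_apply_real,
    integral_map (by fun_prop : Measurable fun u : ι → ℝ => ∑ i, u i * x i).aemeasurable
      (by fun_prop),
    integral_congr_ae (ae_of_all _ hprod),
    integral_fintype_prod_eq_prod (fun i (y : ℝ) => Complex.exp ((t * x i : ℝ) * y * Complex.I))]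
  simp_rw [← charFun_apply_real, charFun_gaussianReal, ← Complex.exp_sum]
  rw [hvar]
  congr 1
  push_cast
  simp only [Finset.sum_sub_distrib, Finset.mul_sum, Finset.sum_mul, Finset.sum_div]
  congr 1 <;> exact Finset.sum_congr rfl fun i _ => by ring

lemma gaussTail_eq_measureReal_Ici (z : ℝ) : gaussTail z = (gaussianReal 0 1).real (Ici z) := by
  have hpdf (t : ℝ) : gaussianPDFReal 0 1 t = Real.exp (-t ^ 2 / 2) / Real.sqrt (2 * Real.pi) := by
    simp [gaussianPDFReal, div_eq_inv_mul, mul_comm]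
  rw [measureReal_def, gaussianReal_apply_eq_integral 0 one_ne_zero,
    ENNReal.toReal_ofReal (integral_nonneg fun t => gaussianPDFReal_nonneg 0 1 t), gaussTail]
  exact setIntegral_congr_fun measurableSet_Ici fun t _ => (hpdf t).symm

lemma gaussTail_eq_measureReal_Ioi (z : ℝ) : gaussTail z = (gaussianReal 0 1).real (Ioi z) := by
  have := nullSingletonClass_gaussianReal (μ := 0) one_ne_zero
  rw [gaussTail_eq_measureReal_Ici, measureReal_congr Ioi_ae_eq_Ici]

lemma gaussTail_add_gaussTail_neg (z : ℝ) : gaussTail z + gaussTail (-z) = 1 := by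
  have hsymm : (gaussianReal 0 1).real (Ioi (-z)) = (gaussianReal 0 1).real (Ici z)ᶜ := by
    conv_lhs => rw [← neg_zero, ← gaussianReal_map_neg]
    rw [map_measureReal_apply measurable_neg measurableSet_Ioi]
    congr 1
    ext y
    simp
  rw [gaussTail_eq_measureReal_Ici, gaussTail_eq_measureReal_Ioi, hsymm,
    measureReal_add_measureReal_compl measurableSet_Ici, probReal_univ]

lemma gaussianReal_measureReal_Ioi (m c : ℝ) {v : ℝ≥0} (hv : v ≠ 0) :
    (gaussianReal m v).real (Ioi c) = gaussTail ((c - m) / √v) := by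
  have hσ : 0 < √(v : ℝ) := Real.sqrt_pos.mpr (by positivity)
  have hstd : (gaussianReal 0 1).map (fun y => √v * y + m) = gaussianReal m v := by
    rw [show (fun y => √v * y + m) = (· + m) ∘ (√v * ·) from rfl,
      ← Measure.map_map (measurable_add_const m) (measurable_const_mul _),
      gaussianReal_map_const_mul, gaussianReal_map_add_const]
    congr 1
    · simp
    · ext
      simp [Real.sq_sqrt v.coe_nonneg]
  rw [← hstd, map_measureReal_apply (by fun_prop) measurableSet_Ioi, gaussTail_eq_measureReal_Ioi]
  congr 1
  ext y
  simp only [mem_preimage, mem_Ioi, div_lt_iff₀ hσ]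
  constructor <;> intro h <;> linarith

end GaussianReal

lemma Measurable.hlin {α : Type*} [MeasurableSpace α] {d : ℕ} {f g : α → Fin d → ℝ}
    (hf : Measurable f) (hg : Measurable g) : Measurable fun a => hlin (f a) (g a) := by
  unfold _root_.hlin dotp
  exact Measurable.ite (measurableSet_lt measurable_const (by fun_prop)) measurable_const
    measurable_const

instance isProbabilityMeasure_gauss {d : ℕ} (w : Fin d → ℝ) : IsProbabilityMeasure (gauss w) := by
  unfold gauss
  infer_instance

lemma gauss_map_dotp {d : ℕ} (w x : Fin d → ℝ) :
    (gauss w).map (dotp · x) = gaussianReal (dotp w x) (∑ i, ‖x i‖₊ ^ 2) := by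
  simpa [gauss, dotp] using map_pi_gaussianReal_sum_mul w (fun _ => 1) x

lemma gauss_measureReal_hlin_eq_true {d : ℕ} (w : Fin d → ℝ) {x : Fin d → ℝ} (hx : x ≠ 0) :
    (gauss w).real ((hlin · x) ⁻¹' {true}) = gaussTail (-(dotp w x / nrm x)) := by
  have hvar : (∑ i, ‖x i‖₊ ^ 2 : ℝ≥0) ≠ 0 := by
    obtain ⟨i, hi⟩ := Function.ne_iff.mp hx
    exact (Finset.sum_pos' (fun _ _ => by positivity)
      ⟨i, Finset.mem_univ i, by simpa [pos_iff_ne_zero] using hi⟩).ne'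
  have hnrm : √((∑ i, ‖x i‖₊ ^ 2 : ℝ≥0) : ℝ) = nrm x := by
    simp [nrm, Real.norm_eq_abs, sq_abs]
  have hset : (hlin · x) ⁻¹' {true} = (dotp · x) ⁻¹' Ioi 0 := by
    ext u
    simp [hlin]
  rw [hset, ← map_measureReal_apply (by unfold dotp; fun_prop) measurableSet_Ioi, gauss_map_dotp,
    gaussianReal_measureReal_Ioi _ _ hvar, hnrm, zero_sub, neg_div]

/-- Expected disagreement of the Gaussian linear posterior (Equation (19)): for any marginal
`D_X` on `ℝ^d` with `D_X`-almost surely `x ≠ 0` and any `w ∈ ℝ^d`,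
`d_{D_X}(ρ_w) = E_{x~D_X} Φ_d((w·x)/‖x‖)` where `Φ_d(z) = 2·Φ(z)·Φ(−z)`. -/
theorem gaussian_expected_disagreement (d : ℕ) (w : Fin d → ℝ)
    (D : Measure (Fin d → ℝ)) [IsProbabilityMeasure D] (hD : ∀ᵐ x ∂D, x ≠ 0) :
    ∫ p, ∫ x, l01 (hlin p.1 x) (hlin p.2 x) ∂D ∂((gauss w).prod (gauss w))
      = ∫ x, PhiDis (dotp w x / nrm x) ∂D := by
  rw [integral_integral_swap (integrable_l01_comp (measurable_fst.fst.hlin measurable_snd)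
    (measurable_fst.snd.hlin measurable_snd))]
  refine integral_congr_ae ?_
  filter_upwards [hD] with x hx
  have hlin_x : Measurable (hlin · x) := measurable_id.hlin measurable_const
  rw [integral_prod (fun p => l01 (hlin p.1 x) (hlin p.2 x))
      (integrable_l01_comp (measurable_fst.hlin measurable_const)
        (measurable_snd.hlin measurable_const)),
    integral_integral_l01 hlin_x, gauss_measureReal_hlin_eq_true w hx, PhiDis,
    eq_sub_of_add_eq (gaussTail_add_gaussTail_neg (dotp w x / nrm x))]
  ring

end
end
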